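/- Let k ≥ 3 and d > d_k. Then φ_{d,k} is not tangent to the identity from below at its largest fixed point: there exists p ∈ (0, p*) with φ_{d,k}(p) > p. Moreover φ_{d,k} is concave on the interval [p*, 1]. -/

import Mathlib

/-!
The derivative of `λ ↦ P[Po(λ) ≥ k-1]` is the Poisson weight `e^{-λ} λ^{k-2}/(k-2)!`, which as a
function of `λ` increases on `[0, k-2]` and decreases afterwards; so `φ_{d,k}` is convex on
`[0, (k-2)/d]` and concave on `[(k-2)/d, ∞)`. Since `d > d_k` there is `λ > 0` with
`λ < d P[Po(λ) ≥ k-1]`, i.e. a point `p₀ = λ/d` with `φ(p₀) > p₀`, and the intermediate value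
theorem yields a fixed point above `p₀`, so `p₀ < p*`. If `p*` were below `(k-2)/d`, then `φ`
would be convex on `[0, p*]` with `φ(0) = 0` and `φ(p*) = p*`, forcing `φ(p₀) ≤ p₀`. Hence
`p* ≥ (k-2)/d`, where `φ` is concave.
-/

open Real Set Filter

/-- Upper tail of the Poisson distribution with mean `lam`:
`P[Po(lam) ≥ m] = ∑_{j ≥ m} e^{-lam} lam^j / j!`. -/
noncomputable def poTail (lam : ℝ) (m : ℕ) : ℝ :=
  ∑' j : ℕ, if m ≤ j then Real.exp (-lam) * lam ^ j / (j.factorial : ℝ) else 0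

/-- `f_k(λ) = λ / P[Po(λ) ≥ k-1]`. -/
noncomputable def fPW (k : ℕ) (lam : ℝ) : ℝ := lam / poTail lam (k - 1)

/-- `d_k = inf { f_k(λ) : λ > 0 }`. -/
noncomputable def dPW (k : ℕ) : ℝ := sInf (fPW k '' Set.Ioi (0 : ℝ))

/-- `φ_{d,k}(p) = P[Po(dp) ≥ k-1]`. -/
noncomputable def phiPW (d : ℝ) (k : ℕ) (p : ℝ) : ℝ := poTail (d * p) (k - 1)

open Nat

noncomputable def poissonTerm (lam : ℝ) (j : ℕ) : ℝ := exp (-lam) * lam ^ j / j !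

lemma poissonTerm_nonneg {lam : ℝ} (h : 0 ≤ lam) (j : ℕ) : 0 ≤ poissonTerm lam j := by
  unfold poissonTerm; positivity

lemma poissonTerm_pos {lam : ℝ} (h : 0 < lam) (j : ℕ) : 0 < poissonTerm lam j := by
  unfold poissonTerm; positivity

lemma poissonTerm_succ (lam : ℝ) (j : ℕ) :
    poissonTerm lam (j + 1) = poissonTerm lam j * lam / (j + 1) := by
  simp only [poissonTerm, factorial_succ, cast_mul, pow_succ]
  field_simp
  push_cast
  ring

lemma continuous_poissonTerm (j : ℕ) : Continuous (poissonTerm · j) := by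
  unfold poissonTerm; fun_prop

lemma hasSum_poissonTerm (lam : ℝ) : HasSum (poissonTerm lam) 1 := by
  have h := (NormedSpace.expSeries_div_hasSum_exp lam).mul_left (exp (-lam))
  rw [← exp_eq_exp_ℝ, ← exp_add, neg_add_cancel, exp_zero] at h
  have e : poissonTerm lam = fun j => exp (-lam) * (lam ^ j / j !) :=
    funext fun j => mul_div_assoc _ _ _
  rwa [e]

lemma hasSum_poTail (lam : ℝ) (m : ℕ) :
    HasSum (fun j => if m ≤ j then poissonTerm lam j else 0)
      (1 - ∑ j ∈ Finset.range m, poissonTerm lam j) := by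
  have hhead : HasSum (fun j => if j < m then poissonTerm lam j else 0)
      (∑ j ∈ Finset.range m, poissonTerm lam j) := by
    have h : HasSum (fun j => if j < m then poissonTerm lam j else 0)
        (∑ j ∈ Finset.range m, if j < m then poissonTerm lam j else 0) :=
      hasSum_sum_of_ne_finset_zero (by simp_all)
    rwa [Finset.sum_congr rfl fun j hj => if_pos (Finset.mem_range.1 hj)] at h
  have e : (fun j => if m ≤ j then poissonTerm lam j else 0) =
      poissonTerm lam - fun j => if j < m then poissonTerm lam j else 0 := by
    funext j
    by_cases hj : m ≤ j <;> simp [hj, not_lt.2, lt_of_not_ge]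
  rw [e]
  exact (hasSum_poissonTerm lam).sub hhead

lemma poTail_eq_one_sub (lam : ℝ) (m : ℕ) :
    poTail lam m = 1 - ∑ j ∈ Finset.range m, poissonTerm lam j :=
  (hasSum_poTail lam m).tsum_eq

lemma poTail_nonneg {lam : ℝ} (h : 0 ≤ lam) (m : ℕ) : 0 ≤ poTail lam m :=
  tsum_nonneg fun j => ite_nonneg (poissonTerm_nonneg h j) le_rfl

lemma poTail_pos {lam : ℝ} (h : 0 < lam) (m : ℕ) : 0 < poTail lam m :=
  (hasSum_poTail lam m).summable.tsum_pos (fun j => ite_nonneg (poissonTerm_nonneg h.le j) le_rfl)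
    m (by simpa using poissonTerm_pos h m)

lemma poTail_le_one {lam : ℝ} (h : 0 ≤ lam) (m : ℕ) : poTail lam m ≤ 1 := by
  rw [poTail_eq_one_sub]
  linarith [Finset.sum_nonneg fun j (_ : j ∈ Finset.range m) => poissonTerm_nonneg h j]

lemma poTail_zero_left {m : ℕ} (hm : m ≠ 0) : poTail 0 m = 0 := by
  obtain ⟨n, rfl⟩ := exists_eq_succ_of_ne_zero hm
  simp [poTail_eq_one_sub, Finset.sum_range_succ', poissonTerm]

lemma hasDerivAt_poissonTerm_zero (x : ℝ) :
    HasDerivAt (poissonTerm · 0) (-poissonTerm x 0) x := by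
  simpa [poissonTerm] using (hasDerivAt_neg x).exp

lemma hasDerivAt_poissonTerm_succ (j : ℕ) (x : ℝ) :
    HasDerivAt (poissonTerm · (j + 1)) (poissonTerm x j - poissonTerm x (j + 1)) x := by
  have h := ((hasDerivAt_neg x).exp.mul (hasDerivAt_pow (j + 1) x)).div_const ((j + 1)! : ℝ)
  refine h.congr_deriv ?_
  simp only [poissonTerm, factorial_succ, cast_mul, add_tsub_cancel_right]
  field_simp
  push_cast
  ring

lemma hasDerivAt_sum_range_poissonTerm (m : ℕ) (x : ℝ) :
    HasDerivAt (fun y => ∑ j ∈ Finset.range (m + 1), poissonTerm y j) (-poissonTerm x m) x := by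
  induction m with
  | zero => simpa using hasDerivAt_poissonTerm_zero x
  | succ m ih =>
    simp_rw [Finset.sum_range_succ _ (m + 1)]
    exact (ih.add (hasDerivAt_poissonTerm_succ m x)).congr_deriv (by ring)

lemma hasDerivAt_poTail_succ (m : ℕ) (x : ℝ) :
    HasDerivAt (poTail · (m + 1)) (poissonTerm x m) x := by
  simp_rw [poTail_eq_one_sub]
  simpa using (hasDerivAt_sum_range_poissonTerm m x).const_sub 1

lemma continuous_poTail_succ (m : ℕ) : Continuous (poTail · (m + 1)) :=
  continuous_iff_continuousAt.2 fun x => (hasDerivAt_poTail_succ m x).continuousAt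

lemma deriv_poTail_succ (m : ℕ) : deriv (poTail · (m + 1)) = (poissonTerm · m) :=
  funext fun x => (hasDerivAt_poTail_succ m x).deriv

lemma hasDerivAt_poissonTerm_succ_eq_mul (n : ℕ) (x : ℝ) :
    HasDerivAt (poissonTerm · (n + 1)) (poissonTerm x n * (1 - x / (n + 1))) x := by
  refine (hasDerivAt_poissonTerm_succ n x).congr_deriv ?_
  rw [poissonTerm_succ]
  ring

lemma monotoneOn_poissonTerm_succ (n : ℕ) :
    MonotoneOn (poissonTerm · (n + 1)) (Icc 0 (n + 1)) := by
  refine monotoneOn_of_hasDerivWithinAt_nonneg (convex_Icc _ _)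
    (continuous_poissonTerm _).continuousOn
    (fun x _ => (hasDerivAt_poissonTerm_succ_eq_mul n x).hasDerivWithinAt) fun x hx => ?_
  rw [interior_Icc] at hx
  have : x / (n + 1) ≤ 1 := (div_le_one (by positivity)).2 hx.2.le
  exact mul_nonneg (poissonTerm_nonneg hx.1.le n) (by linarith)

lemma antitoneOn_poissonTerm_succ (n : ℕ) :
    AntitoneOn (poissonTerm · (n + 1)) (Ici (n + 1)) := by
  refine antitoneOn_of_hasDerivWithinAt_nonpos (convex_Ici _)
    (continuous_poissonTerm _).continuousOn
    (fun x _ => (hasDerivAt_poissonTerm_succ_eq_mul n x).hasDerivWithinAt) fun x hx => ?_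
  have hx : (n : ℝ) + 1 < x := by rwa [interior_Ici] at hx
  have : 1 ≤ x / (n + 1) := (one_le_div (by positivity)).2 hx.le
  exact mul_nonpos_of_nonneg_of_nonpos (poissonTerm_nonneg (by linarith) n) (by linarith)

lemma convexOn_poTail (n : ℕ) : ConvexOn ℝ (Icc 0 ((n : ℝ) + 1)) (poTail · (n + 2)) :=
  MonotoneOn.convexOn_of_deriv (convex_Icc _ _) (continuous_poTail_succ _).continuousOn
    (fun x _ => (hasDerivAt_poTail_succ _ x).differentiableAt.differentiableWithinAt)
    (by rw [deriv_poTail_succ]; exact (monotoneOn_poissonTerm_succ n).mono interior_subset)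

lemma concaveOn_poTail (n : ℕ) : ConcaveOn ℝ (Ici ((n : ℝ) + 1)) (poTail · (n + 2)) :=
  AntitoneOn.concaveOn_of_deriv (convex_Ici _) (continuous_poTail_succ _).continuousOn
    (fun x _ => (hasDerivAt_poTail_succ _ x).differentiableAt.differentiableWithinAt)
    (by rw [deriv_poTail_succ]; exact (antitoneOn_poissonTerm_succ n).mono interior_subset)

lemma ConvexOn.le_self_of_map_zero_of_map_self {f : ℝ → ℝ} {b x : ℝ}
    (hf : ConvexOn ℝ (Icc 0 b) f) (h₀ : f 0 = 0) (hb : f b = b) (hx : x ∈ Icc 0 b) :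
    f x ≤ x := by
  have hb₀ : 0 ≤ b := hx.1.trans hx.2
  have := (hf.sub (concaveOn_id (convex_Icc 0 b))).le_on_segment (left_mem_Icc.2 hb₀)
    (right_mem_Icc.2 hb₀) (by rwa [segment_eq_Icc hb₀])
  simpa only [Pi.sub_apply, id, h₀, hb, sub_self, max_self, tsub_le_iff_right, zero_add] using this

lemma exists_fixedPoint_mem_Ioc {f : ℝ → ℝ} {a b : ℝ} (hab : a ≤ b)
    (hf : ContinuousOn f (Icc a b)) (ha : a < f a) (hb : f b ≤ b) : ∃ q ∈ Ioc a b, f q = q := by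
  obtain ⟨q, hq, hfq⟩ := intermediate_value_Icc' hab (hf.sub continuousOn_id)
    (show (0 : ℝ) ∈ Icc (f b - b) (f a - a) from ⟨by linarith, by linarith⟩)
  have hfq : f q = q := sub_eq_zero.1 hfq
  refine ⟨q, ⟨hq.1.lt_of_ne ?_, hq.2⟩, hfq⟩
  rintro rfl
  linarith

lemma dPW_nonneg (k : ℕ) : 0 ≤ dPW k :=
  Real.sInf_nonneg <| by
    rintro _ ⟨lam, hlam, rfl⟩
    exact div_nonneg hlam.le (poTail_nonneg hlam.le _)

lemma exists_lt_phiPW_of_dPW_lt {d : ℝ} {k : ℕ} (hd : dPW k < d) :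
    ∃ p ∈ Ioc 0 1, p < phiPW d k p := by
  obtain ⟨_, ⟨lam, hlam, rfl⟩, hlt⟩ :=
    exists_lt_of_csInf_lt ⟨_, mem_image_of_mem (fPW k) (mem_Ioi.2 one_pos)⟩ hd
  have hlam : 0 < lam := hlam
  have hP := poTail_pos hlam (k - 1)
  have hlam_lt : lam < d * poTail lam (k - 1) := by rwa [fPW, div_lt_iff₀ hP] at hlt
  have hd₀ : 0 < d := pos_of_mul_pos_left (hlam.trans hlam_lt) hP.le
  have hdlam : d * (lam / d) = lam := mul_div_cancel₀ _ hd₀.ne'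
  refine ⟨lam / d, ⟨div_pos hlam hd₀, (div_le_one hd₀).2 ?_⟩, ?_⟩
  · nlinarith [poTail_le_one hlam.le (k - 1)]
  · rwa [phiPW, hdlam, div_lt_iff₀' hd₀]

lemma phiPW_zero (d : ℝ) {k : ℕ} (hk : 2 ≤ k) : phiPW d k 0 = 0 := by
  rw [phiPW, mul_zero, poTail_zero_left (by omega)]

lemma continuous_phiPW (d : ℝ) (n : ℕ) : Continuous (phiPW d (n + 2)) :=
  (continuous_poTail_succ n).comp (continuous_const_mul d)

lemma convexOn_phiPW {d : ℝ} (hd : 0 < d) (n : ℕ) :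
    ConvexOn ℝ (Icc 0 (((n : ℝ) + 1) / d)) (phiPW d (n + 3)) :=
  ((convexOn_poTail n).comp_linearMap (LinearMap.mulLeft ℝ d)).subset
    (fun _ hp => ⟨mul_nonneg hd.le hp.1, (le_div_iff₀' hd).1 hp.2⟩) (convex_Icc _ _)

lemma concaveOn_phiPW {d : ℝ} (hd : 0 < d) (n : ℕ) :
    ConcaveOn ℝ (Ici (((n : ℝ) + 1) / d)) (phiPW d (n + 3)) :=
  ((concaveOn_poTail n).comp_linearMap (LinearMap.mulLeft ℝ d)).subset
    (fun _ hp => (div_le_iff₀' hd).1 hp) (convex_Ici _)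

theorem stmt_9_general (k : ℕ) (hk : 3 ≤ k) (d : ℝ) (hd : dPW k < d)
    (pstar : ℝ) (hp_fix : phiPW d k pstar = pstar)
    (hp_max : ∀ p ∈ Set.Icc (0 : ℝ) 1, phiPW d k p = p → p ≤ pstar) :
    (∃ p : ℝ, 0 < p ∧ p < pstar ∧ p < phiPW d k p) ∧
    ConcaveOn ℝ (Set.Icc pstar 1) (phiPW d k) := by
  obtain ⟨n, rfl⟩ : ∃ n, k = n + 3 := ⟨k - 3, by omega⟩
  have hd₀ : 0 < d := (dPW_nonneg _).trans_lt hd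
  obtain ⟨p₀, ⟨hp₀, hp₀_le⟩, hp₀_lt⟩ := exists_lt_phiPW_of_dPW_lt hd
  obtain ⟨q, ⟨hp₀q, hq_le⟩, hq⟩ := exists_fixedPoint_mem_Ioc hp₀_le
    (continuous_phiPW d (n + 1)).continuousOn hp₀_lt (poTail_le_one (by linarith) _)
  have hp₀_pstar : p₀ < pstar := hp₀q.trans_le (hp_max q ⟨hp₀.le.trans hp₀q.le, hq_le⟩ hq)
  have hpstar : ((n : ℝ) + 1) / d ≤ pstar := by
    by_contra! h
    have := ((convexOn_phiPW hd₀ n).subset (Icc_subset_Icc_right h.le) (convex_Icc _ _)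
      ).le_self_of_map_zero_of_map_self (phiPW_zero d (by omega)) hp_fix ⟨hp₀.le, hp₀_pstar.le⟩
    linarith
  exact ⟨⟨p₀, hp₀, hp₀_pstar, hp₀_lt⟩, (concaveOn_phiPW hd₀ n).subset
    (Icc_subset_Ici_self.trans (Ici_subset_Ici.2 hpstar)) (convex_Icc _ _)⟩

theorem stmt_9 (k : ℕ) (hk : 3 ≤ k) (d : ℝ) (hd : dPW k < d)
    (pstar : ℝ) (hp_mem : pstar ∈ Set.Icc (0 : ℝ) 1) (hp_fix : phiPW d k pstar = pstar)
    (hp_max : ∀ p ∈ Set.Icc (0 : ℝ) 1, phiPW d k p = p → p ≤ pstar) :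
    (∃ p : ℝ, 0 < p ∧ p < pstar ∧ p < phiPW d k p) ∧
    ConcaveOn ℝ (Set.Icc pstar 1) (phiPW d k) :=
  stmt_9_general k hk d hd pstar hp_fix hp_max
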